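/- arXiv:1605.07372 — 4 statements merged into one kernel-verified Lean document; each statement's English description precedes it below -/
import Mathlib

section
/- Let U_A, U_B be unitaries on a Hilbert space and |ψ⟩ a unit vector such that either [U_A, U_B]|ψ⟩ = 0 or {U_A, U_B}|ψ⟩ = 0. Then after applying the switch V followed by Hadamard on the control, with initial state |+⟩⊗|ψ⟩, the control qubit is in state |0⟩ (up to phase and tensoring with a unit target state) in the commuting case and |1⟩ in the anticommuting case; in particular the two cases are perfectly distinguished by a computational-basis measurement of the control. -/
/-! After the switch and the Hadamard gate, `|+⟩ ⊗ |ψ⟩` becomes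
`|0⟩ ⊗ ½ {U_A, U_B} ψ + |1⟩ ⊗ ½ [U_B, U_A] ψ`. If one of the two components vanishes,
`U_A U_B ψ = ± U_B U_A ψ`, so the other component equals `U_B U_A ψ`, a unit vector. -/

lemma inv_sqrt_two_mul_inv_sqrt_two : ((Real.sqrt 2 : ℂ))⁻¹ * ((Real.sqrt 2 : ℂ))⁻¹ = 2⁻¹ := by
  rw [← mul_inv, ← Complex.ofReal_mul, Real.mul_self_sqrt zero_le_two, Complex.ofReal_ofNat]

lemma inv_two_smul_add_self {E : Type*} [AddCommGroup E] [Module ℂ E] (x : E) :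
    (2 : ℂ)⁻¹ • (x + x) = x := by
  rw [← two_smul ℂ x, smul_smul, inv_mul_cancel₀ two_ne_zero, one_smul]

lemma hadamard_switch_apply {H : Type*} [AddCommGroup H] [Module ℂ H] [TopologicalSpace H]
    (UA UB : H →L[ℂ] H) (ψ : H) (V Had : WithLp 2 (H × H) → WithLp 2 (H × H))
    (hV : ∀ φ : WithLp 2 (H × H),
      (V φ).ofLp.1 = UB (UA φ.ofLp.1) ∧ (V φ).ofLp.2 = UA (UB φ.ofLp.2))
    (hHad : ∀ φ : WithLp 2 (H × H),
      (Had φ).ofLp.1 = ((Real.sqrt 2 : ℂ))⁻¹ • (φ.ofLp.1 + φ.ofLp.2) ∧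
      (Had φ).ofLp.2 = ((Real.sqrt 2 : ℂ))⁻¹ • (φ.ofLp.1 - φ.ofLp.2))
    (p : WithLp 2 (H × H))
    (hp1 : p.ofLp.1 = ((Real.sqrt 2 : ℂ))⁻¹ • ψ) (hp2 : p.ofLp.2 = ((Real.sqrt 2 : ℂ))⁻¹ • ψ) :
    (Had (V p)).ofLp.1 = (2 : ℂ)⁻¹ • (UB (UA ψ) + UA (UB ψ)) ∧
      (Had (V p)).ofLp.2 = (2 : ℂ)⁻¹ • (UB (UA ψ) - UA (UB ψ)) := by
  obtain ⟨hV1, hV2⟩ := hV p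
  obtain ⟨hHad1, hHad2⟩ := hHad (V p)
  simp only [hV1, hV2, hp1, hp2, map_smul] at hHad1 hHad2
  rw [hHad1, hHad2, ← smul_add, ← smul_sub, smul_smul, smul_smul,
    inv_sqrt_two_mul_inv_sqrt_two]
  exact ⟨rfl, rfl⟩

theorem stmt7 {H : Type*} [NormedAddCommGroup H] [InnerProductSpace ℂ H] [CompleteSpace H]
    (UA UB : H →L[ℂ] H)
    (hUA : UA ∈ unitary (H →L[ℂ] H)) (hUB : UB ∈ unitary (H →L[ℂ] H))
    (ψ : H) (hψ : ‖ψ‖ = 1)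
    (V Had : WithLp 2 (H × H) →L[ℂ] WithLp 2 (H × H))
    (hV : ∀ φ : WithLp 2 (H × H),
      (V φ).ofLp.1 = UB (UA φ.ofLp.1) ∧ (V φ).ofLp.2 = UA (UB φ.ofLp.2))
    (hHad : ∀ φ : WithLp 2 (H × H),
      (Had φ).ofLp.1 = ((Real.sqrt 2 : ℂ))⁻¹ • (φ.ofLp.1 + φ.ofLp.2) ∧
      (Had φ).ofLp.2 = ((Real.sqrt 2 : ℂ))⁻¹ • (φ.ofLp.1 - φ.ofLp.2))
    -- `p` is the initial state `|+⟩_c ⊗ |ψ⟩_t`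
    (p : WithLp 2 (H × H))
    (hp1 : p.ofLp.1 = ((Real.sqrt 2 : ℂ))⁻¹ • ψ) (hp2 : p.ofLp.2 = ((Real.sqrt 2 : ℂ))⁻¹ • ψ) :
    -- commuting case: control ends in `|0⟩`
    (UA (UB ψ) - UB (UA ψ) = 0 →
      (Had (V p)).ofLp.2 = 0 ∧ ‖(Had (V p)).ofLp.1‖ = 1) ∧
    -- anticommuting case: control ends in `|1⟩`
    (UA (UB ψ) + UB (UA ψ) = 0 →
      (Had (V p)).ofLp.1 = 0 ∧ ‖(Had (V p)).ofLp.2‖ = 1) := by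
  obtain ⟨hfst, hsnd⟩ := hadamard_switch_apply UA UB ψ V Had hV hHad p hp1 hp2
  have hunit : ‖UB (UA ψ)‖ = 1 := by
    rw [ContinuousLinearMap.norm_map_of_mem_unitary hUB,
      ContinuousLinearMap.norm_map_of_mem_unitary hUA, hψ]
  refine ⟨fun hcomm => ?_, fun hanti => ?_⟩
  · rw [sub_eq_zero.mp hcomm] at hfst hsnd
    rw [hsnd, sub_self, smul_zero, hfst, inv_two_smul_add_self, hunit]
    exact ⟨rfl, rfl⟩
  · rw [eq_neg_of_add_eq_zero_left hanti] at hfst hsnd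
    rw [hfst, add_neg_cancel, smul_zero, hsnd, sub_neg_eq_add, inv_two_smul_add_self, hunit]
    exact ⟨rfl, rfl⟩
end

section
/- If {ρ_x} are pairwise orthogonal states on C^d ⊗ H_B (ρ_x ρ_y = 0 for x ≠ y) that all have the same reduced state on H_B, then the number of indices x is at most d². -/
open scoped ComplexOrder

open Matrix Module

section Aux

variable {V : Type*} [AddCommGroup V] [Module ℂ V] [FiniteDimensional ℂ V]

/-- If a family of subspaces `W i` together with a subspace `K` satisfies that any
decomposition of `0` as `z + ∑ f i` with `z ∈ K`, `f i ∈ W i` is trivial, then the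
dimensions add up to at most `dim V`. -/
lemma aux_sum_finrank_le {ι : Type*} [Fintype ι] [DecidableEq ι]
    (W : ι → Submodule ℂ V) (K : Submodule ℂ V)
    (h : ∀ (f : ∀ i, W i) (z : K), (z : V) + ∑ i, (f i : V) = 0 →
      (z : V) = 0 ∧ ∀ i, (f i : V) = 0) :
    finrank ℂ K + ∑ i, finrank ℂ (W i) ≤ finrank ℂ V := by
  classical
  let L : (K × ∀ i, W i) →ₗ[ℂ] V :=
    LinearMap.coprod K.subtype (LinearMap.lsum ℂ (fun i => W i) ℂ (fun i => (W i).subtype))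
  have hL : ∀ x : K × ∀ i, W i, L x = (x.1 : V) + ∑ i, (x.2 i : V) := by
    intro x
    simp [L, LinearMap.lsum_apply, LinearMap.coprod_apply]
  have hinj : Function.Injective L := by
    rw [← LinearMap.ker_eq_bot]
    rw [LinearMap.ker_eq_bot']
    rintro ⟨z, f⟩ h0
    rw [hL] at h0
    obtain ⟨hz, hf⟩ := h f z h0
    refine Prod.ext (Subtype.ext hz) ?_
    funext i
    exact Subtype.ext (hf i)
  have := LinearMap.finrank_le_finrank_of_injective hinj
  rwa [Module.finrank_prod, Module.finrank_pi_fintype] at this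

lemma matrix_rank_add_le {n : Type*} [Fintype n] [DecidableEq n]
    (A B : Matrix n n ℂ) : (A + B).rank ≤ A.rank + B.rank := by
  have hle : LinearMap.range (A + B).mulVecLin ≤
      LinearMap.range A.mulVecLin ⊔ LinearMap.range B.mulVecLin := by
    rintro _ ⟨x, rfl⟩
    rw [Matrix.mulVecLin_apply, Matrix.add_mulVec]
    exact Submodule.add_mem_sup ⟨x, rfl⟩ ⟨x, rfl⟩
  refine (Submodule.finrank_mono hle).trans ?_
  exact Submodule.finrank_add_le_finrank_add_finrank _ _

lemma matrix_rank_sum_le {n : Type*} [Fintype n] [DecidableEq n]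
    {α : Type*} (s : Finset α) (M : α → Matrix n n ℂ) :
    (∑ a ∈ s, M a).rank ≤ ∑ a ∈ s, (M a).rank := by
  classical
  induction s using Finset.induction with
  | empty => simp [Matrix.rank_zero]
  | insert _ _ hx ih =>
    rw [Finset.sum_insert hx, Finset.sum_insert hx]
    exact (matrix_rank_add_le _ _).trans (by omega)

lemma dotProduct_sum' {n : Type*} [Fintype n] {α : Type*} (s : Finset α)
    (v : n → ℂ) (u : α → n → ℂ) :
    v ⬝ᵥ (∑ a ∈ s, u a) = ∑ a ∈ s, v ⬝ᵥ u a := by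
  classical
  induction s using Finset.induction with
  | empty => simp
  | insert _ _ hx ih => simp [Finset.sum_insert hx, dotProduct_add, ih]

lemma sum_mulVec' {n : Type*} [Fintype n] {α : Type*} (s : Finset α)
    (M : α → Matrix n n ℂ) (v : n → ℂ) :
    (∑ a ∈ s, M a) *ᵥ v = ∑ a ∈ s, M a *ᵥ v := by
  classical
  induction s using Finset.induction with
  | empty => simp
  | insert _ _ hx ih => simp [Finset.sum_insert hx, Matrix.add_mulVec, ih]

lemma mulVec_sum' {n : Type*} [Fintype n] {α : Type*} (s : Finset α)
    (M : Matrix n n ℂ) (v : α → n → ℂ) :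
    M *ᵥ (∑ a ∈ s, v a) = ∑ a ∈ s, M *ᵥ v a := by
  simpa only [Matrix.mulVecLin_apply] using map_sum M.mulVecLin v s

end Aux

/-- Pairwise orthogonal states on `C^d ⊗ H_B` (with `H_B ≅ C^m`) that all have the
same reduced state on `H_B` number at most `d²`. -/
theorem stmt10 (d m : ℕ) {ι : Type*} [Fintype ι]
    (ρ : ι → Matrix (Fin d × Fin m) (Fin d × Fin m) ℂ)
    (hstate : ∀ i, (ρ i).PosSemidef ∧ (ρ i).trace = 1)
    (horth : ∀ i j, i ≠ j → ρ i * ρ j = 0)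
    -- all states have the same partial trace over the `C^d` factor
    (hmarg : ∀ i j, (fun (b b' : Fin m) => ∑ a : Fin d, ρ i (a, b) (a, b'))
                  = (fun (b b' : Fin m) => ∑ a : Fin d, ρ j (a, b) (a, b'))) :
    Fintype.card ι ≤ d ^ 2 := by
  classical
  rcases isEmpty_or_nonempty ι with hι | hι
  · simp [Fintype.card_eq_zero]
  obtain ⟨i₀⟩ := hι
  -- the common marginal
  set τ : Matrix (Fin m) (Fin m) ℂ := fun b b' => ∑ a : Fin d, ρ i₀ (a, b) (a, b') with hτdef
  -- the compression matrices
  set E : Fin d → Matrix (Fin m) (Fin d × Fin m) ℂ :=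
    fun a b p => if p = (a, b) then 1 else 0 with hEdef
  -- blocks
  have h1 : ∀ (i : ι) (a : Fin d) (b : Fin m) p', (E a * ρ i) b p' = ρ i (a, b) p' := by
    intro i a b p'
    rw [Matrix.mul_apply, Finset.sum_eq_single ((a, b) : Fin d × Fin m)]
    · simp [hEdef]
    · intro q _ hq; simp [hEdef, hq]
    · simp
  have hblock : ∀ i a, (E a * ρ i * (E a)ᴴ) =
      fun b b' => ρ i (a, b) (a, b') := by
    intro i a
    ext b b'
    rw [Matrix.mul_apply, Finset.sum_eq_single ((a, b') : Fin d × Fin m)]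
    · rw [h1, Matrix.conjTranspose_apply]; simp [hEdef]
    · intro q _ hq; rw [Matrix.conjTranspose_apply]; simp [hEdef, hq]
    · simp
  have hblockPSD : ∀ i a, (E a * ρ i * (E a)ᴴ).PosSemidef :=
    fun i a => (hstate i).1.mul_mul_conjTranspose_same (E a)
  -- τ is the sum of the blocks of any ρ i
  have hτsum : ∀ i, τ = ∑ a : Fin d, E a * ρ i * (E a)ᴴ := by
    intro i
    ext b b'
    have := congrFun (congrFun (hmarg i₀ i) b) b'
    show (∑ a : Fin d, ρ i₀ (a, b) (a, b')) = _
    rw [this, Matrix.sum_apply]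
    exact Finset.sum_congr rfl fun a _ => by rw [hblock i a]
  have hτPSD : τ.PosSemidef := by
    rw [hτsum i₀]
    exact Finset.sum_induction _ _ (fun A B hA hB => hA.add hB) .zero
      (fun a _ => hblockPSD i₀ a)
  -- kill lemma: if τ *ᵥ w = 0 then ρ i kills the vector supported on slice a with value w
  have hkill : ∀ i (a : Fin d) (w : Fin m → ℂ), τ *ᵥ w = 0 →
      ρ i *ᵥ (fun p => if p.1 = a then w p.2 else 0) = 0 := by
    intro i a w hw
    set z : Fin d × Fin m → ℂ := fun p => if p.1 = a then w p.2 else 0 with hzdef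
    have hzq : star z ⬝ᵥ ρ i *ᵥ z = star w ⬝ᵥ (E a * ρ i * (E a)ᴴ) *ᵥ w := by
      rw [hblock i a]
      simp only [dotProduct, Matrix.mulVec, dotProduct, Pi.star_apply,
        hzdef, Fintype.sum_prod_type]
      simp [apply_ite, ite_mul, mul_ite, Finset.sum_ite_eq', Finset.mul_sum]
    have hterm0 : star w ⬝ᵥ (E a * ρ i * (E a)ᴴ) *ᵥ w = 0 := by
      have hsum : ∑ a' : Fin d, star w ⬝ᵥ (E a' * ρ i * (E a')ᴴ) *ᵥ w = 0 := by
        have : star w ⬝ᵥ τ *ᵥ w = 0 := by rw [hw, dotProduct_zero]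
        rw [← this, hτsum i, sum_mulVec', dotProduct_sum']
      have hnn : ∀ a' ∈ Finset.univ, (0:ℂ) ≤ star w ⬝ᵥ (E a' * ρ i * (E a')ᴴ) *ᵥ w :=
        fun a' _ => (hblockPSD i a').dotProduct_mulVec_nonneg w
      exact (Finset.sum_eq_zero_iff_of_nonneg hnn).mp hsum a (Finset.mem_univ a)
    have := ((hstate i).1.dotProduct_mulVec_zero_iff z).mp (by rw [hzq, hterm0])
    exact this
  -- orthogonality: ρ i kills the range of ρ j for j ≠ i
  have hker2 : ∀ i (u : Fin d × Fin m → ℂ), ρ i *ᵥ (ρ i *ᵥ u) = 0 → ρ i *ᵥ u = 0 := by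
    intro i u hu
    have h0 : star (ρ i *ᵥ u) ⬝ᵥ (ρ i *ᵥ u) = 0 := by
      rw [Matrix.star_mulVec, ← Matrix.dotProduct_mulVec, (hstate i).1.1.eq, hu,
        dotProduct_zero]
    exact dotProduct_star_self_eq_zero.mp h0
  -- the dimension count
  set Kτ : Submodule ℂ (Fin m → ℂ) := LinearMap.ker τ.mulVecLin with hKτdef
  -- embedding of (Fin d → ker τ) into the big space
  let Lz : (Fin d → Kτ) →ₗ[ℂ] (Fin d × Fin m → ℂ) :=
    { toFun := fun w p => (w p.1 : Fin m → ℂ) p.2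
      map_add' := by intro x y; funext p; simp
      map_smul' := by intro c x; funext p; simp }
  have hLzinj : Function.Injective Lz := by
    rw [← LinearMap.ker_eq_bot, LinearMap.ker_eq_bot']
    intro w hw
    funext a
    refine Subtype.ext (funext fun b => ?_)
    exact congrFun hw (a, b)
  set K : Submodule ℂ (Fin d × Fin m → ℂ) := LinearMap.range Lz with hKdef
  set W : ι → Submodule ℂ (Fin d × Fin m → ℂ) :=
    fun i => LinearMap.range (ρ i).mulVecLin with hWdef
  -- ρ i kills K
  have hkillK : ∀ i (z : Fin d × Fin m → ℂ), z ∈ K → ρ i *ᵥ z = 0 := by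
    intro i z hz
    obtain ⟨w, rfl⟩ := hz
    have hzsplit : (Lz w : Fin d × Fin m → ℂ) =
        ∑ a : Fin d, (fun p => if p.1 = a then (w a : Fin m → ℂ) p.2 else 0) := by
      funext p
      simp only [Finset.sum_apply]
      rw [Finset.sum_eq_single p.1]
      · simp [Lz]
      · intro a _ ha; simp [Ne.symm ha]
      · simp
    rw [hzsplit, mulVec_sum']
    refine Finset.sum_eq_zero fun a _ => ?_
    exact hkill i a (w a) ((w a).2)
  -- main independence property
  have hmain : ∀ (f : ∀ i, W i) (z : K),
      (z : Fin d × Fin m → ℂ) + ∑ i, (f i : Fin d × Fin m → ℂ) = 0 →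
      (z : Fin d × Fin m → ℂ) = 0 ∧ ∀ i, (f i : Fin d × Fin m → ℂ) = 0 := by
    intro f z h0
    have hfi : ∀ i, (f i : Fin d × Fin m → ℂ) = 0 := by
      intro i
      obtain ⟨u, hu⟩ := (f i).2
      have happ := congrArg (fun v => ρ i *ᵥ v) h0
      simp only [Matrix.mulVec_add, mulVec_sum', Matrix.mulVec_zero] at happ
      rw [hkillK i _ z.2, zero_add] at happ
      have hsingle : ∑ j, ρ i *ᵥ (f j : Fin d × Fin m → ℂ) = ρ i *ᵥ (f i : _) := by
        rw [Finset.sum_eq_single i]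
        · intro j _ hj
          obtain ⟨uj, huj⟩ := (f j).2
          rw [← huj, Matrix.mulVecLin_apply, Matrix.mulVec_mulVec, horth i j (Ne.symm hj),
            Matrix.zero_mulVec]
        · simp
      rw [hsingle] at happ
      have hu' : ρ i *ᵥ u = (f i : Fin d × Fin m → ℂ) := by
        rw [← hu, Matrix.mulVecLin_apply]
      have hzero : ρ i *ᵥ u = 0 := hker2 i u (by rw [hu']; exact happ)
      rw [← hu', hzero]
    constructor
    · have := h0
      rw [Finset.sum_congr rfl (fun i _ => hfi i)] at this
      simpa using this
    · exact hfi
  have hdim := aux_sum_finrank_le W K hmain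
  -- compute the dimensions
  have hKrank : finrank ℂ K = d * finrank ℂ Kτ := by
    rw [hKdef, LinearMap.finrank_range_of_inj hLzinj, Module.finrank_pi_fintype]
    simp [Finset.sum_const]
  have hWrank : ∀ i, finrank ℂ (W i) = (ρ i).rank := fun i => rfl
  have htot : finrank ℂ (Fin d × Fin m → ℂ) = d * m := by
    simp [Module.finrank_pi]
  have hranknull : τ.rank + finrank ℂ Kτ = m := by
    have := LinearMap.finrank_range_add_finrank_ker τ.mulVecLin
    rw [Module.finrank_pi] at this
    simpa [Matrix.rank, hKτdef] using this
  -- rank lower bound : τ.rank ≤ d * (ρ i).rank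
  have hlow : ∀ i, τ.rank ≤ d * (ρ i).rank := by
    intro i
    calc τ.rank = (∑ a : Fin d, E a * ρ i * (E a)ᴴ).rank := by rw [← hτsum i]
      _ ≤ ∑ a : Fin d, (E a * ρ i * (E a)ᴴ).rank := matrix_rank_sum_le _ _
      _ ≤ ∑ _a : Fin d, (ρ i).rank := Finset.sum_le_sum fun a _ =>
          (Matrix.rank_mul_le_left _ _).trans (Matrix.rank_mul_le_right _ _)
      _ = d * (ρ i).rank := by simp [Finset.sum_const, mul_comm]
  -- τ has positive rank since its trace is 1
  have hτtrace : τ.trace = 1 := by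
    have := (hstate i₀).2
    rw [← this]
    simp only [Matrix.trace, Matrix.diag, hτdef, Fintype.sum_prod_type]
    exact Finset.sum_comm
  have hrpos : 1 ≤ τ.rank := by
    by_contra hr
    push_neg at hr
    interval_cases h : τ.rank
    have hτ0 : τ = 0 := by
      have hrange : LinearMap.range τ.mulVecLin = ⊥ := by
        have : finrank ℂ (LinearMap.range τ.mulVecLin) = 0 := h
        exact Submodule.finrank_eq_zero.mp this
      ext b b'
      have : τ.mulVecLin (Pi.single b' 1) = 0 := by
        have := LinearMap.mem_range_self τ.mulVecLin (Pi.single b' 1)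
        rw [hrange] at this
        simpa using this
      have := congrFun this b
      simpa [Matrix.mulVecLin_apply, Matrix.mulVec_single] using this
    rw [hτ0] at hτtrace
    simp at hτtrace
  -- put everything together
  have hsum_le : ∑ i, (ρ i).rank ≤ d * τ.rank := by
    have h1 : d * finrank ℂ Kτ + ∑ i, (ρ i).rank ≤ d * m := by
      rw [← hKrank, ← htot]
      calc finrank ℂ K + ∑ i, (ρ i).rank
          = finrank ℂ K + ∑ i, finrank ℂ (W i) := by
            exact congrArg _ (Finset.sum_congr rfl fun i _ => (hWrank i).symm)
        _ ≤ finrank ℂ (Fin d × Fin m → ℂ) := hdim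
    have h2 : d * m = d * τ.rank + d * finrank ℂ Kτ := by
      rw [← Nat.mul_add, hranknull]
    omega
  have hfinal : Fintype.card ι * τ.rank ≤ d ^ 2 * τ.rank := by
    calc Fintype.card ι * τ.rank = ∑ _i : ι, τ.rank := by simp [Finset.sum_const, mul_comm]
      _ ≤ ∑ i : ι, d * (ρ i).rank := Finset.sum_le_sum fun i _ => hlow i
      _ = d * ∑ i : ι, (ρ i).rank := by rw [Finset.mul_sum]
      _ ≤ d * (d * τ.rank) := Nat.mul_le_mul_left _ hsum_le
      _ = d ^ 2 * τ.rank := by ring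
  exact Nat.le_of_mul_le_mul_right hfinal hrpos
end

section
/- The subset S = { (y, g) ∈ Z_2^n × F_n : g = 0, y ≠ 0 } is shattered by EE_n viewed as a function of Alice's input: for every R ⊆ S there exists (x, f) ∈ Z_2^n × F_n such that EE_n(x, f, y, g) = 1 for all (y,g) ∈ R and EE_n(x, f, y, g) = 0 for all (y,g) ∈ S \ R. -/
/- On `S` Bob's function is `0`, so `EE` reduces to `f y`; take `f` the indicator of the
`y`-slice of `R`, which vanishes at `0` because `S` avoids `y = 0`. -/

/-- Binary vectors of length `n` over `Z_2`. -/
abbrev V2 (n : ℕ) := Fin n → ZMod 2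

/-- The Exchange Evaluation game: `EE_n(x,f,y,g) = f(y) ⊕ g(x)`. -/
def EE {n : ℕ} (x : V2 n) (f : V2 n → ZMod 2) (y : V2 n) (g : V2 n → ZMod 2) : ZMod 2 :=
  f y + g x

theorem EE_zero_right {n : ℕ} (x : V2 n) (f : V2 n → ZMod 2) (y : V2 n) :
    EE x f y 0 = f y :=
  add_zero (f y)

/-- The set `S = {(y, g) : g = 0, y ≠ 0}` is shattered by `EE_n` (viewed as a
function of Alice's input `(x, f) ∈ Z_2^n × F_n`). -/
theorem stmt13 (n : ℕ)
    (S : Set (V2 n × (V2 n → ZMod 2)))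
    (hS : S = {p | p.2 = 0 ∧ p.1 ≠ 0})
    (R : Set (V2 n × (V2 n → ZMod 2))) (hR : R ⊆ S) :
    ∃ (x : V2 n) (f : V2 n → ZMod 2), f 0 = 0 ∧
      (∀ p ∈ R, EE x f p.1 p.2 = 1) ∧
      (∀ p ∈ S \ R, EE x f p.1 p.2 = 0) := by
  subst hS
  refine ⟨0, {y | (y, (0 : V2 n → ZMod 2)) ∈ R}.indicator 1, ?_, ?_, ?_⟩
  · have h00 : ((0 : V2 n), (0 : V2 n → ZMod 2)) ∉ R := fun h0 => (hR h0).2 rfl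
    exact Set.indicator_of_notMem h00 1
  · rintro ⟨y, g⟩ hp
    obtain rfl : g = 0 := (hR hp).1
    simp [EE_zero_right, Set.indicator_of_mem, hp]
  · rintro ⟨y, g⟩ ⟨⟨rfl, -⟩, hp⟩
    simp [EE_zero_right, Set.indicator_of_notMem, hp]
end

section
/- For the Exchange Evaluation game EE_n, deterministic one-way classical communication requires at least 2^n + n − 1 bits, i.e., ⌈log₂ |Z_2^n × F_n|⌉ = 2^n + n − 1. -/
/-- Alice's (and Bob's) input set `Z_2^n × F_n`, where `F_n = {f | f 0 = 0}`. -/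
abbrev EEInput (n : ℕ) := {p : V2 n × (V2 n → ZMod 2) // p.2 0 = 0}

def exchangeEval {n : ℕ} (a b : EEInput n) : ZMod 2 := a.1.2 b.1.1 + b.1.2 a.1.1

theorem exchangeEval_injective (n : ℕ) : Function.Injective (@exchangeEval n) := by
  rintro ⟨⟨x, f⟩, _⟩ ⟨⟨x', f'⟩, _⟩ hrow
  have hf_eq : f = f' := funext fun y => by
    simpa [exchangeEval] using congr_fun hrow ⟨(y, 0), rfl⟩
  subst hf_eq
  have hx_eq : x = x' := funext fun i => by
    simpa [exchangeEval] using congr_fun hrow ⟨(0, fun v => v i), rfl⟩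
  subst hx_eq
  rfl

theorem clog_card_inputs_le_clog_card_messages {X Y Z M : Type*} [Fintype X] [Fintype M]
    {F : X → Y → Z} (hF : Function.Injective F) (msg : X → M) (out : M → Y → Z)
    (hcorrect : ∀ a b, out (msg a) b = F a b) (b : ℕ) :
    Nat.clog b (Fintype.card X) ≤ Nat.clog b (Fintype.card M) := by
  have hmsg : Function.Injective msg :=
    Function.Injective.of_comp (f := out) (by
      rwa [show out ∘ msg = F from funext fun a => funext (hcorrect a)])
  exact Nat.clog_mono_right b (Fintype.card_le_of_injective msg hmsg)

theorem Fintype.card_subtype_apply_eq {α β : Type*} [Fintype α] [DecidableEq α] [Fintype β]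
    [DecidableEq β] (a : α) (b : β) :
    Fintype.card {f : α → β // f a = b} = Fintype.card β ^ (Fintype.card α - 1) := by
  have e : {f : α → β // f a = b} ≃ {c // c = b} × ({j // j ≠ a} → β) :=
    ((Equiv.funSplitAt a β).subtypeEquiv fun f => by simp [Equiv.funSplitAt]).trans
      Equiv.prodSubtypeFstEquivSubtypeProd
  rw [Fintype.card_congr e, Fintype.card_prod, Fintype.card_subtype_eq, one_mul,
    Fintype.card_fun, Fintype.card_subtype_compl, Fintype.card_subtype_eq]

theorem card_EEInput (n : ℕ) : Fintype.card (EEInput n) = 2 ^ (2 ^ n + n - 1) := by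
  have e : EEInput n ≃ V2 n × {f : V2 n → ZMod 2 // f 0 = 0} :=
    { toFun p := (p.1.1, ⟨p.1.2, p.2⟩)
      invFun q := ⟨(q.1, q.2.1), q.2.2⟩ }
  rw [Fintype.card_congr e, Fintype.card_prod, Fintype.card_subtype_apply_eq, Fintype.card_fun,
    Fintype.card_fin, ZMod.card, ← pow_add]
  have : 1 ≤ 2 ^ n := Nat.one_le_two_pow
  congr 1
  omega

/-- Deterministic one-way classical communication for `EE_n` requires at least
`2^n + n − 1` bits: `⌈log₂ |Z_2^n × F_n|⌉ = 2^n + n − 1`, and any message set `M`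
of a correct protocol satisfies `⌈log₂ |M|⌉ ≥ 2^n + n − 1`. -/
theorem stmt16 (n : ℕ) {M : Type*} [Fintype M]
    (msg : EEInput n → M) (out : M → EEInput n → ZMod 2)
    -- correctness: Bob outputs `EE_n(x, f, y, g) = f(y) + g(x)` for all inputs,
    -- where Alice holds `a = (x, f)` and Bob holds `b = (y, g)`
    (hcorrect : ∀ a b : EEInput n, out (msg a) b = a.1.2 b.1.1 + b.1.2 a.1.1) :
    Nat.clog 2 (Fintype.card (EEInput n)) = 2 ^ n + n - 1 ∧
    2 ^ n + n - 1 ≤ Nat.clog 2 (Fintype.card M) := by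
  have hclog : Nat.clog 2 (Fintype.card (EEInput n)) = 2 ^ n + n - 1 := by
    rw [card_EEInput, Nat.clog_pow 2 _ one_lt_two]
  refine ⟨hclog, hclog ▸ ?_⟩
  exact clog_card_inputs_le_clog_card_messages (exchangeEval_injective n) msg out hcorrect 2
end
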